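/- arXiv:cs/0307056 — 2 statements merged into one kernel-verified Lean document; each statement's English description precedes it below -/
import Mathlib

section
/- Let (Ω_N) be a sequence of finite nonempty sets, and for each N let K_N, K'_N, φ_N ⊆ Ω_N, with K_N, K'_N eventually nonempty. Define Pr_N(A|B) = |A ∩ B|/|B| for nonempty B. If lim_{N} Pr_N(φ_N | K_N) = 1 and lim_{N} Pr_N(φ_N | K'_N) = 1, then lim_{N} Pr_N(φ_N | K_N ∪ K'_N) = 1. -/
open Filter

/-- Conditional probability over finite sets of worlds: `|A ∩ B| / |B|`. -/
noncomputable def condPr {α : Type*} [DecidableEq α] (A B : Finset α) : ℝ :=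
  ((A ∩ B).card : ℝ) / (B.card : ℝ)

lemma condPr_le_one {α : Type*} [DecidableEq α] (A B : Finset α) : condPr A B ≤ 1 := by
  unfold condPr
  rcases Nat.eq_zero_or_pos B.card with h | h
  · simp [h]
  · rw [div_le_one (by exact_mod_cast h)]
    exact_mod_cast Finset.card_le_card (Finset.inter_subset_right)

lemma one_sub_condPr {α : Type*} [DecidableEq α] (A B : Finset α) (hB : B.Nonempty) :
    1 - condPr A B = ((B \ A).card : ℝ) / (B.card : ℝ) := by
  have hBc : (0:ℝ) < B.card := by exact_mod_cast Finset.card_pos.mpr hB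
  unfold condPr
  rw [eq_div_iff hBc.ne', sub_mul, one_mul, div_mul_cancel₀ _ hBc.ne']
  have : (B \ A).card + (A ∩ B).card = B.card := by
    rw [Finset.inter_comm]
    exact Finset.card_sdiff_add_card_inter B A
  have h2 : ((B \ A).card : ℝ) + ((A ∩ B).card : ℝ) = (B.card : ℝ) := by exact_mod_cast this
  linarith

/-- The Or rule: if `Pr_N(φ|K) → 1` and `Pr_N(φ|K') → 1`, then `Pr_N(φ|K ∪ K') → 1`. -/
theorem stmt1 {α : Type*} [DecidableEq α]
    (K K' φ : ℕ → Finset α)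
    (hK : ∀ᶠ N in atTop, (K N).Nonempty)
    (hK' : ∀ᶠ N in atTop, (K' N).Nonempty)
    (h1 : Tendsto (fun N => condPr (φ N) (K N)) atTop (nhds 1))
    (h2 : Tendsto (fun N => condPr (φ N) (K' N)) atTop (nhds 1)) :
    Tendsto (fun N => condPr (φ N) (K N ∪ K' N)) atTop (nhds 1) := by
  have hlow : Tendsto (fun N => 1 - ((1 - condPr (φ N) (K N)) + (1 - condPr (φ N) (K' N))))
      atTop (nhds 1) := by
    have : Tendsto (fun N => (1 - condPr (φ N) (K N)) + (1 - condPr (φ N) (K' N)))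
        atTop (nhds 0) := by
      have := ((tendsto_const_nhds (x := (1:ℝ))).sub h1).add ((tendsto_const_nhds (x := (1:ℝ))).sub h2)
      simpa using this
    simpa using tendsto_const_nhds.sub this
  refine tendsto_of_tendsto_of_tendsto_of_le_of_le' hlow tendsto_const_nhds ?_
    (Eventually.of_forall fun N => condPr_le_one _ _)
  filter_upwards [hK, hK'] with N hk hk'
  have hU : (K N ∪ K' N).Nonempty := hk.mono Finset.subset_union_left
  have hKc : (0:ℝ) < (K N).card := by exact_mod_cast Finset.card_pos.mpr hk
  have hK'c : (0:ℝ) < (K' N).card := by exact_mod_cast Finset.card_pos.mpr hk'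
  have hUc : (0:ℝ) < ((K N ∪ K' N).card : ℝ) := by exact_mod_cast Finset.card_pos.mpr hU
  have hKU : ((K N).card : ℝ) ≤ ((K N ∪ K' N).card : ℝ) := by
    exact_mod_cast Finset.card_le_card Finset.subset_union_left
  have hK'U : ((K' N).card : ℝ) ≤ ((K N ∪ K' N).card : ℝ) := by
    exact_mod_cast Finset.card_le_card Finset.subset_union_right
  have key : 1 - condPr (φ N) (K N ∪ K' N)
      ≤ (1 - condPr (φ N) (K N)) + (1 - condPr (φ N) (K' N)) := by
    rw [one_sub_condPr _ _ hk, one_sub_condPr _ _ hk', one_sub_condPr _ _ hU]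
    have hcard : (((K N ∪ K' N) \ φ N).card : ℝ)
        ≤ ((K N \ φ N).card : ℝ) + ((K' N \ φ N).card : ℝ) := by
      rw [Finset.union_sdiff_distrib]
      exact_mod_cast Finset.card_union_le _ _
    calc (((K N ∪ K' N) \ φ N).card : ℝ) / ((K N ∪ K' N).card : ℝ)
        ≤ (((K N \ φ N).card : ℝ) + ((K' N \ φ N).card : ℝ)) / ((K N ∪ K' N).card : ℝ) :=
          by gcongr
      _ ≤ ((K N \ φ N).card : ℝ) / ((K N).card : ℝ) + ((K' N \ φ N).card : ℝ) / ((K' N).card : ℝ) := by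
          rw [add_div]
          gcongr
  linarith
end

section
/- Let (Ω_N) be finite nonempty sets and K_N, θ_N, φ_N ⊆ Ω_N with K_N eventually nonempty. Define Pr_N(A|B) = |A∩B|/|B|. Suppose lim_N Pr_N(φ_N|K_N) = 1 and there exist ε > 0 and infinitely many N with K_N ∩ θ_N ≠ ∅ and Pr_N(θ_N|K_N) > ε. If lim_N Pr_N(φ_N | K_N ∩ θ_N) exists, then it equals 1. -/
open Filter

lemma key {α : Type*} [DecidableEq α] (K θ φ : Finset α) (ε : ℝ) (hε : 0 < ε)
    (hK : K.Nonempty) (hKθ : (K ∩ θ).Nonempty) (hθ : ε < condPr θ K) :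
    1 - (1 - condPr φ K) / ε ≤ condPr φ (K ∩ θ) := by
  have hk : (0:ℝ) < (K.card : ℝ) := by exact_mod_cast hK.card_pos
  have hb : (0:ℝ) < ((K ∩ θ).card : ℝ) := by exact_mod_cast hKθ.card_pos
  have hsub : (((K ∩ θ) \ φ).card : ℝ) ≤ ((K \ φ).card : ℝ) := by
    exact_mod_cast Finset.card_le_card
      (Finset.sdiff_subset_sdiff Finset.inter_subset_left le_rfl)
  have e1 : (((K ∩ θ) ∩ φ).card : ℝ) + (((K ∩ θ) \ φ).card : ℝ) = ((K ∩ θ).card : ℝ) := by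
    exact_mod_cast Finset.card_inter_add_card_sdiff (K ∩ θ) φ
  have e2 : ((K ∩ φ).card : ℝ) + ((K \ φ).card : ℝ) = (K.card : ℝ) := by
    exact_mod_cast Finset.card_inter_add_card_sdiff K φ
  have hθ' : ε * (K.card : ℝ) < ((K ∩ θ).card : ℝ) := by
    unfold condPr at hθ
    rw [lt_div_iff₀ hk] at hθ
    rw [Finset.inter_comm θ K] at hθ
    linarith
  unfold condPr
  rw [Finset.inter_comm φ (K ∩ θ), Finset.inter_comm φ K]
  rw [one_sub_div (ne_of_gt hk), div_div, sub_le_iff_le_add,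
      div_add_div _ _ (ne_of_gt hb) (mul_ne_zero (ne_of_gt hk) (ne_of_gt hε)),
      le_div_iff₀ (by positivity)]
  nlinarith [mul_nonneg (sub_nonneg.2 hθ'.le)
      (sub_nonneg.2 (show ((K ∩ φ).card : ℝ) ≤ (K.card : ℝ) by linarith [(Nat.cast_nonneg (K \ φ).card : (0:ℝ) ≤ _)])),
    (Nat.cast_nonneg ((K ∩ θ) ∩ φ).card : (0:ℝ) ≤ _), (Nat.cast_nonneg ((K ∩ θ) \ φ).card : (0:ℝ) ≤ _)]

/-- Weak Rational Monotonicity: if `Pr_N(φ|K) → 1` and `Pr_N(θ|K)` is bounded away from 0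
along a subsequence (with `K ∩ θ` nonempty there), then any existing limit of
`Pr_N(φ|K∩θ)` equals 1. -/
theorem stmt4 {α : Type*} [DecidableEq α]
    (K θ φ : ℕ → Finset α) (ε : ℝ)
    (hK : ∀ᶠ N in atTop, (K N).Nonempty)
    (h1 : Tendsto (fun N => condPr (φ N) (K N)) atTop (nhds 1))
    (hε : 0 < ε)
    (hfreq : ∃ᶠ N in atTop, (K N ∩ θ N).Nonempty ∧ ε < condPr (θ N) (K N)) :
    ∀ L : ℝ, Tendsto (fun N => condPr (φ N) (K N ∩ θ N)) atTop (nhds L) → L = 1 := by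
  intro L hL
  have hle : L ≤ 1 :=
    le_of_tendsto hL (Eventually.of_forall fun N => condPr_le_one _ _)
  have hge : ∀ δ : ℝ, 0 < δ → 1 - δ ≤ L := by
    intro δ hδ
    have hA : ∀ᶠ N in atTop, |condPr (φ N) (K N ∩ θ N) - L| < δ / 2 := by
      have := Metric.tendsto_atTop.1 hL (δ / 2) (by linarith)
      filter_upwards [eventually_atTop.2 this] with N h
      simpa [Real.dist_eq] using h
    have hB : ∀ᶠ N in atTop, 1 - condPr (φ N) (K N) < ε * (δ / 2) := by
      have := Metric.tendsto_atTop.1 h1 (ε * (δ / 2)) (by positivity)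
      filter_upwards [eventually_atTop.2 this] with N h
      rw [Real.dist_eq] at h
      calc 1 - condPr (φ N) (K N) ≤ |condPr (φ N) (K N) - 1| := by
            rw [abs_sub_comm]; exact le_abs_self _
        _ < ε * (δ / 2) := h
    obtain ⟨N, ⟨⟨hne, hθN⟩, hAN, hBN, hKN⟩⟩ :=
      (hfreq.and_eventually (hA.and (hB.and hK))).exists
    have hkey := key (K N) (θ N) (φ N) ε hε hKN hne hθN
    have : 1 - δ / 2 < condPr (φ N) (K N ∩ θ N) := by
      have : (1 - condPr (φ N) (K N)) / ε < δ / 2 := by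
        rw [div_lt_iff₀ hε]; linarith
      linarith
    have habs := abs_lt.1 hAN
    linarith
  by_contra hne
  have hlt : L < 1 := lt_of_le_of_ne hle hne
  have := hge ((1 - L) / 2) (by linarith)
  linarith
end
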